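/- arXiv:1503.06877 — 4 statements merged into one kernel-verified Lean document; each statement's English description precedes it below -/
import Mathlib

section
/- Let p be a positive integer, let κ, κ⁻, κ⁺ : Fin p → ℝ with 0 < κ⁻ i ≤ κ i ≤ κ⁺ i for all i, and let ω : Fin n → ℝ be nonnegative lot sizes and D : Fin p → Fin n → ℝ nonnegative scaled distances (D i j = ω j · ‖v i − z j‖² in the application). For a cluster assignment c : Fin n → Fin p define f₂(c) = ∑_{i} (1 / ∑_{j : c j = i} ω j) · ∑_{j : c j = i} D i j and f₃(c) = ∑_{i} (1 / κ i) · ∑_{j : c j = i} D i j. Suppose every assignment c in a nonempty feasible set S satisfies κ⁻ i ≤ ∑_{j : c j = i} ω j ≤ κ⁺ i for all i. If π ∈ S minimizes f₃ over S and π' ∈ S minimizes f₂ over S, then f₂(π) ≤ (max_{i} κ i / κ⁻ i) · (max_{i} κ⁺ i / κ i) · f₂(π'). -/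
/-!
On a feasible assignment every cluster total `W i` lies in `[κ⁻ i, κ⁺ i]`, so the normalising
weights of `f₂` and `f₃` are comparable cluster by cluster: `1 / W i ≤ (κ i / κ⁻ i) * (1 / κ i)`
and `1 / κ i ≤ (κ⁺ i / κ i) * (1 / W i)`. Summing against the nonnegative cluster costs gives
`f₂ ≤ A * f₃` and `f₃ ≤ B * f₂` on the feasible set, and then
`f₂ π ≤ A * f₃ π ≤ A * f₃ π' ≤ A * B * f₂ π'`.
-/

open Finset

theorem one_div_le_mul_one_div_iff {x y C : ℝ} (hx : 0 < x) (hy : 0 < y) :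
    1 / x ≤ C * (1 / y) ↔ y / x ≤ C := by
  rw [mul_one_div, div_le_div_iff₀ hx hy, one_mul, div_le_iff₀ hx]

theorem sum_mul_le_mul_sum_mul {ι : Type*} (s : Finset ι) {u v T : ι → ℝ} {C : ℝ}
    (hT : ∀ i ∈ s, 0 ≤ T i) (huv : ∀ i ∈ s, u i ≤ C * v i) :
    ∑ i ∈ s, u i * T i ≤ C * ∑ i ∈ s, v i * T i := by
  rw [mul_sum]
  refine sum_le_sum fun i hi => ?_
  rw [← mul_assoc]
  exact mul_le_mul_of_nonneg_right (huv i hi) (hT i hi)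

section ClusterWeights

variable {ι : Type*} (s : Finset ι) {w κ T : ι → ℝ}

theorem sum_one_div_mul_le_of_lower_bound {κm : ι → ℝ} {A : ℝ}
    (hT : ∀ i ∈ s, 0 ≤ T i) (hκ : ∀ i ∈ s, 0 < κ i)
    (hκm : ∀ i ∈ s, 0 < κm i) (hw : ∀ i ∈ s, κm i ≤ w i) (hA : ∀ i ∈ s, κ i / κm i ≤ A) :
    ∑ i ∈ s, 1 / w i * T i ≤ A * ∑ i ∈ s, 1 / κ i * T i :=
  sum_mul_le_mul_sum_mul s hT fun i hi =>
    (one_div_le_mul_one_div_iff ((hκm i hi).trans_le (hw i hi)) (hκ i hi)).2 <|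
      (div_le_div_of_nonneg_left (hκ i hi).le (hκm i hi) (hw i hi)).trans (hA i hi)

theorem sum_one_div_mul_le_of_upper_bound {κp : ι → ℝ} {B : ℝ}
    (hT : ∀ i ∈ s, 0 ≤ T i) (hκ : ∀ i ∈ s, 0 < κ i)
    (hw₀ : ∀ i ∈ s, 0 < w i) (hw : ∀ i ∈ s, w i ≤ κp i) (hB : ∀ i ∈ s, κp i / κ i ≤ B) :
    ∑ i ∈ s, 1 / κ i * T i ≤ B * ∑ i ∈ s, 1 / w i * T i :=
  sum_mul_le_mul_sum_mul s hT fun i hi =>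
    (one_div_le_mul_one_div_iff (hκ i hi) (hw₀ i hi)).2 <|
      (div_le_div_of_nonneg_right (hw i hi) (hκ i hi).le).trans (hB i hi)

end ClusterWeights

theorem stmt_0_general (n p : ℕ) (hp : 0 < p)
    (κ κm κp : Fin p → ℝ)
    (hκ : ∀ i, 0 < κm i ∧ κm i ≤ κ i ∧ κ i ≤ κp i)
    (ω : Fin n → ℝ)
    (D : Fin p → Fin n → ℝ) (hD : ∀ i j, 0 ≤ D i j)
    (f₂ f₃ : (Fin n → Fin p) → ℝ)
    (hf₂ : ∀ c, f₂ c =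
      ∑ i, (1 / ∑ j ∈ Finset.univ.filter (fun j => c j = i), ω j) *
        ∑ j ∈ Finset.univ.filter (fun j => c j = i), D i j)
    (hf₃ : ∀ c, f₃ c =
      ∑ i, (1 / κ i) * ∑ j ∈ Finset.univ.filter (fun j => c j = i), D i j)
    (S : Set (Fin n → Fin p))
    (hfeas : ∀ c ∈ S, ∀ i,
      κm i ≤ ∑ j ∈ Finset.univ.filter (fun j => c j = i), ω j ∧
      ∑ j ∈ Finset.univ.filter (fun j => c j = i), ω j ≤ κp i)
    (π π' : Fin n → Fin p) (hπS : π ∈ S) (hπ'S : π' ∈ S)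
    (hπmin : ∀ c ∈ S, f₃ π ≤ f₃ c) :
    f₂ π ≤
      (Finset.univ.sup' (Finset.univ_nonempty_iff.mpr ⟨⟨0, hp⟩⟩)
          (fun i => κ i / κm i)) *
      (Finset.univ.sup' (Finset.univ_nonempty_iff.mpr ⟨⟨0, hp⟩⟩)
          (fun i => κp i / κ i)) * f₂ π' := by
  set A := Finset.univ.sup' (Finset.univ_nonempty_iff.mpr ⟨⟨0, hp⟩⟩) fun i => κ i / κm i
  set B := Finset.univ.sup' (Finset.univ_nonempty_iff.mpr ⟨⟨0, hp⟩⟩) fun i => κp i / κ i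
  have hκpos (i : Fin p) : 0 < κ i := (hκ i).1.trans_le (hκ i).2.1
  have hA (i : Fin p) : κ i / κm i ≤ A := le_sup' (fun i => κ i / κm i) (mem_univ i)
  have hB (i : Fin p) : κp i / κ i ≤ B := le_sup' (fun i => κp i / κ i) (mem_univ i)
  have hA₀ : 0 ≤ A := (div_pos (hκpos ⟨0, hp⟩) (hκ ⟨0, hp⟩).1).le.trans (hA ⟨0, hp⟩)
  have hcost (c : Fin n → Fin p) (i : Fin p) : 0 ≤ ∑ j ∈ univ.filter (c · = i), D i j :=
    sum_nonneg fun j _ => hD i j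
  have hf₂₃ : f₂ π ≤ A * f₃ π := by
    rw [hf₂, hf₃]
    exact sum_one_div_mul_le_of_lower_bound univ (fun i _ => hcost π i) (fun i _ => hκpos i)
      (fun i _ => (hκ i).1) (fun i _ => (hfeas π hπS i).1) (fun i _ => hA i)
  have hf₃₂ : f₃ π' ≤ B * f₂ π' := by
    rw [hf₂, hf₃]
    exact sum_one_div_mul_le_of_upper_bound univ (fun i _ => hcost π' i) (fun i _ => hκpos i)
      (fun i _ => (hκ i).1.trans_le (hfeas π' hπ'S i).1) (fun i _ => (hfeas π' hπ'S i).2)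
      (fun i _ => hB i)
  calc f₂ π ≤ A * f₃ π := hf₂₃
    _ ≤ A * f₃ π' := mul_le_mul_of_nonneg_left (hπmin π' hπ'S) hA₀
    _ ≤ A * (B * f₂ π') := mul_le_mul_of_nonneg_left hf₃₂ hA₀
    _ = A * B * f₂ π' := (mul_assoc A B _).symm

/-- Lemma 1 of the paper: the optimum of the surrogate objective `f₃` is a
`(max_i κ i / κ⁻ i) * (max_i κ⁺ i / κ i)`-approximation for the normed
least-squares objective `f₂`. -/
theorem stmt_0 (n p : ℕ) (hp : 0 < p)
    (κ κm κp : Fin p → ℝ)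
    (hκ : ∀ i, 0 < κm i ∧ κm i ≤ κ i ∧ κ i ≤ κp i)
    (ω : Fin n → ℝ) (hω : ∀ j, 0 ≤ ω j)
    (D : Fin p → Fin n → ℝ) (hD : ∀ i j, 0 ≤ D i j)
    (f₂ f₃ : (Fin n → Fin p) → ℝ)
    (hf₂ : ∀ c, f₂ c =
      ∑ i, (1 / ∑ j ∈ Finset.univ.filter (fun j => c j = i), ω j) *
        ∑ j ∈ Finset.univ.filter (fun j => c j = i), D i j)
    (hf₃ : ∀ c, f₃ c =
      ∑ i, (1 / κ i) * ∑ j ∈ Finset.univ.filter (fun j => c j = i), D i j)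
    (S : Set (Fin n → Fin p)) (hS : S.Nonempty)
    (hfeas : ∀ c ∈ S, ∀ i,
      κm i ≤ ∑ j ∈ Finset.univ.filter (fun j => c j = i), ω j ∧
      ∑ j ∈ Finset.univ.filter (fun j => c j = i), ω j ≤ κp i)
    (π π' : Fin n → Fin p) (hπS : π ∈ S) (hπ'S : π' ∈ S)
    (hπmin : ∀ c ∈ S, f₃ π ≤ f₃ c)
    (hπ'min : ∀ c ∈ S, f₂ π' ≤ f₂ c) :
    f₂ π ≤
      (Finset.univ.sup' (Finset.univ_nonempty_iff.mpr ⟨⟨0, hp⟩⟩)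
          (fun i => κ i / κm i)) *
      (Finset.univ.sup' (Finset.univ_nonempty_iff.mpr ⟨⟨0, hp⟩⟩)
          (fun i => κp i / κ i)) * f₂ π' :=
  stmt_0_general n p hp κ κm κp hκ ω D hD f₂ f₃ hf₂ hf₃ S hfeas π π' hπS hπ'S hπmin
end

section
/- Let p be a positive integer, κ, κ⁺ : Fin p → ℝ with 0 < κ i ≤ κ⁺ i for all i, ω : Fin n → ℝ nonnegative and D : Fin p → Fin n → ℝ nonnegative. For a cluster assignment c : Fin n → Fin p define f₂(c) = ∑_{i} (1 / ∑_{j : c j = i} ω j) · ∑_{j : c j = i} D i j and f₃(c) = ∑_{i} (1 / κ i) · ∑_{j : c j = i} D i j. If the assignment c satisfies 0 < ∑_{j : c j = i} ω j ≤ κ⁺ i for all i, then f₃(c) ≤ (max_{i} κ⁺ i / κ i) · f₂(c). -/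
/-! The inequality holds cluster by cluster: the weight `W` of cluster `i` is at most
`κ⁺ i ≤ M κ i`, where `M = max_i κ⁺ i / κ i`, so `1 / κ i ≤ M / W`. -/

open Finset

theorem one_div_mul_le_mul_one_div_mul {κ κp W M S : ℝ} (hκ : 0 < κ) (hW : 0 < W)
    (hWκp : W ≤ κp) (hM : κp / κ ≤ M) (hS : 0 ≤ S) :
    1 / κ * S ≤ M * (1 / W * S) := by
  have hWM : W ≤ M * κ := by
    calc W ≤ κp := hWκp
      _ = κp / κ * κ := (div_mul_cancel₀ κp hκ.ne').symm
      _ ≤ M * κ := by gcongr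
  have hinv : 1 / κ ≤ M * (1 / W) := by
    rw [mul_one_div, div_le_div_iff₀ hκ hW]
    linarith
  calc 1 / κ * S ≤ M * (1 / W) * S := by gcongr
    _ = M * (1 / W * S) := mul_assoc _ _ _

theorem Finset.sum_one_div_mul_le_sup'_mul_sum {ι : Type*} (s : Finset ι) (hs : s.Nonempty)
    (κ κp W S : ι → ℝ) (hκ : ∀ i ∈ s, 0 < κ i) (hW : ∀ i ∈ s, 0 < W i ∧ W i ≤ κp i)
    (hS : ∀ i ∈ s, 0 ≤ S i) :
    ∑ i ∈ s, 1 / κ i * S i ≤ s.sup' hs (fun i => κp i / κ i) * ∑ i ∈ s, 1 / W i * S i := by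
  rw [mul_sum]
  refine sum_le_sum fun i hi => ?_
  exact one_div_mul_le_mul_one_div_mul (hκ i hi) (hW i hi).1 (hW i hi).2
    (le_sup' (fun i => κp i / κ i) hi) (hS i hi)

theorem stmt_2_general (n p : ℕ) (hp : 0 < p)
    (κ κp : Fin p → ℝ)
    (hκ : ∀ i, 0 < κ i ∧ κ i ≤ κp i)
    (ω : Fin n → ℝ)
    (D : Fin p → Fin n → ℝ) (hD : ∀ i j, 0 ≤ D i j)
    (f₂ f₃ : (Fin n → Fin p) → ℝ)
    (hf₂ : ∀ c, f₂ c =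
      ∑ i, (1 / ∑ j ∈ Finset.univ.filter (fun j => c j = i), ω j) *
        ∑ j ∈ Finset.univ.filter (fun j => c j = i), D i j)
    (hf₃ : ∀ c, f₃ c =
      ∑ i, (1 / κ i) * ∑ j ∈ Finset.univ.filter (fun j => c j = i), D i j)
    (c : Fin n → Fin p)
    (hc : ∀ i, 0 < ∑ j ∈ Finset.univ.filter (fun j => c j = i), ω j ∧
      ∑ j ∈ Finset.univ.filter (fun j => c j = i), ω j ≤ κp i) :
    f₃ c ≤
      (Finset.univ.sup' (Finset.univ_nonempty_iff.mpr ⟨⟨0, hp⟩⟩)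
          (fun i => κp i / κ i)) * f₂ c := by
  rw [hf₂, hf₃]
  exact univ.sum_one_div_mul_le_sup'_mul_sum _ κ κp _ _ (fun i _ => (hκ i).1)
    (fun i _ => hc i) (fun i _ => sum_nonneg fun j _ => hD i j)

/-- Second inequality in the proof of Lemma 1: `f₃ c ≤ (max_i κ⁺ i / κ i) * f₂ c`. -/
theorem stmt_2 (n p : ℕ) (hp : 0 < p)
    (κ κp : Fin p → ℝ)
    (hκ : ∀ i, 0 < κ i ∧ κ i ≤ κp i)
    (ω : Fin n → ℝ) (hω : ∀ j, 0 ≤ ω j)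
    (D : Fin p → Fin n → ℝ) (hD : ∀ i j, 0 ≤ D i j)
    (f₂ f₃ : (Fin n → Fin p) → ℝ)
    (hf₂ : ∀ c, f₂ c =
      ∑ i, (1 / ∑ j ∈ Finset.univ.filter (fun j => c j = i), ω j) *
        ∑ j ∈ Finset.univ.filter (fun j => c j = i), D i j)
    (hf₃ : ∀ c, f₃ c =
      ∑ i, (1 / κ i) * ∑ j ∈ Finset.univ.filter (fun j => c j = i), D i j)
    (c : Fin n → Fin p)
    (hc : ∀ i, 0 < ∑ j ∈ Finset.univ.filter (fun j => c j = i), ω j ∧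
      ∑ j ∈ Finset.univ.filter (fun j => c j = i), ω j ≤ κp i) :
    f₃ c ≤
      (Finset.univ.sup' (Finset.univ_nonempty_iff.mpr ⟨⟨0, hp⟩⟩)
          (fun i => κp i / κ i)) * f₂ c :=
  stmt_2_general n p hp κ κp hκ ω D hD f₂ f₃ hf₂ hf₃ c hc
end

section
/- Let p be a positive integer, κ : Fin p → ℝ with κ i > 0 for all i, and set κ⁻ i = 0.97 · κ i and κ⁺ i = 1.03 · κ i. Let ω : Fin n → ℝ be nonnegative and D : Fin p → Fin n → ℝ nonnegative, and define f₂ and f₃ on assignments c : Fin n → Fin p by f₂(c) = ∑_{i} (1 / ∑_{j : c j = i} ω j) · ∑_{j : c j = i} D i j and f₃(c) = ∑_{i} (1 / κ i) · ∑_{j : c j = i} D i j. Suppose every assignment in a nonempty feasible set S satisfies κ⁻ i ≤ ∑_{j : c j = i} ω j ≤ κ⁺ i for all i. If π ∈ S minimizes f₃ over S and π' ∈ S minimizes f₂ over S, then f₂(π) ≤ (103/97) · f₂(π'). -/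
/-! Writing `w c i` for the mass of cluster `i` under `c`, feasibility gives
`0.97 κ i ≤ w c i ≤ 1.03 κ i`. Comparing the objectives termwise, `f₂ ≤ f₃ / 0.97` and
`f₃ ≤ 1.03 f₂` on `S`, so for any `c ∈ S` the `f₃`-minimizer `π` satisfies
`f₂ π ≤ f₃ π / 0.97 ≤ f₃ c / 0.97 ≤ (1.03 / 0.97) f₂ c`. -/

open Finset

theorem sum_one_div_mul_le_mul_sum_one_div_mul {ι : Type*} (s : Finset ι) {u v T : ι → ℝ}
    {c : ℝ} (hu : ∀ i ∈ s, 0 < u i) (hv : ∀ i ∈ s, 0 < v i) (hT : ∀ i ∈ s, 0 ≤ T i)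
    (hvu : ∀ i ∈ s, v i ≤ c * u i) :
    ∑ i ∈ s, 1 / u i * T i ≤ c * ∑ i ∈ s, 1 / v i * T i := by
  rw [mul_sum]
  refine sum_le_sum fun i hi => ?_
  have hinv : 1 / u i ≤ c / v i := by
    rw [div_le_div_iff₀ (hu i hi) (hv i hi)]
    linarith [hvu i hi]
  calc 1 / u i * T i ≤ c / v i * T i := mul_le_mul_of_nonneg_right hinv (hT i hi)
    _ = c * (1 / v i * T i) := by ring

theorem IsMinOn.le_mul_mul_of_le_mul {α : Type*} {S : Set α} {f g : α → ℝ} {a b : ℝ}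
    (ha : 0 ≤ a) (hfg : ∀ c ∈ S, f c ≤ a * g c) (hgf : ∀ c ∈ S, g c ≤ b * f c)
    {x y : α} (hmin : IsMinOn g S x) (hx : x ∈ S) (hy : y ∈ S) :
    f x ≤ a * b * f y :=
  calc f x ≤ a * g x := hfg x hx
    _ ≤ a * g y := mul_le_mul_of_nonneg_left (isMinOn_iff.1 hmin y hy) ha
    _ ≤ a * (b * f y) := mul_le_mul_of_nonneg_left (hgf y hy) ha
    _ = a * b * f y := by ring

theorem stmt_3_general (n p : ℕ)
    (κ : Fin p → ℝ) (hκ : ∀ i, 0 < κ i)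
    (κm κp : Fin p → ℝ)
    (hκm : ∀ i, κm i = 0.97 * κ i) (hκp : ∀ i, κp i = 1.03 * κ i)
    (ω : Fin n → ℝ)
    (D : Fin p → Fin n → ℝ) (hD : ∀ i j, 0 ≤ D i j)
    (f₂ f₃ : (Fin n → Fin p) → ℝ)
    (hf₂ : ∀ c, f₂ c =
      ∑ i, (1 / ∑ j ∈ Finset.univ.filter (fun j => c j = i), ω j) *
        ∑ j ∈ Finset.univ.filter (fun j => c j = i), D i j)
    (hf₃ : ∀ c, f₃ c =
      ∑ i, (1 / κ i) * ∑ j ∈ Finset.univ.filter (fun j => c j = i), D i j)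
    (S : Set (Fin n → Fin p))
    (hfeas : ∀ c ∈ S, ∀ i,
      κm i ≤ ∑ j ∈ Finset.univ.filter (fun j => c j = i), ω j ∧
      ∑ j ∈ Finset.univ.filter (fun j => c j = i), ω j ≤ κp i)
    (π π' : Fin n → Fin p) (hπS : π ∈ S) (hπ'S : π' ∈ S)
    (hπmin : ∀ c ∈ S, f₃ π ≤ f₃ c) :
    f₂ π ≤ (103 / 97) * f₂ π' := by
  have hmass : ∀ c ∈ S, ∀ i, 0.97 * κ i ≤ ∑ j ∈ univ.filter (fun j => c j = i), ω j ∧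
      ∑ j ∈ univ.filter (fun j => c j = i), ω j ≤ 1.03 * κ i := fun c hc i => by
    simpa only [hκm, hκp] using hfeas c hc i
  have hmass_pos : ∀ c ∈ S, ∀ i, 0 < ∑ j ∈ univ.filter (fun j => c j = i), ω j :=
    fun c hc i => by linarith [hκ i, (hmass c hc i).1]
  have hcost : ∀ (c : Fin n → Fin p) i, 0 ≤ ∑ j ∈ univ.filter (fun j => c j = i), D i j :=
    fun c i => sum_nonneg fun j _ => hD i j
  have hf₂_le : ∀ c ∈ S, f₂ c ≤ 1 / 0.97 * f₃ c := fun c hc => by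
    rw [hf₂, hf₃]
    refine sum_one_div_mul_le_mul_sum_one_div_mul _ (fun i _ => hmass_pos c hc i)
      (fun i _ => hκ i) (fun i _ => hcost c i) fun i _ => ?_
    rw [div_mul_eq_mul_div, one_mul, le_div_iff₀ (by norm_num)]
    linarith [(hmass c hc i).1]
  have hf₃_le : ∀ c ∈ S, f₃ c ≤ 1.03 * f₂ c := fun c hc => by
    rw [hf₂, hf₃]
    exact sum_one_div_mul_le_mul_sum_one_div_mul _ (fun i _ => hκ i)
      (fun i _ => hmass_pos c hc i) (fun i _ => hcost c i) fun i _ => (hmass c hc i).2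
  have hfactor : (103 / 97 : ℝ) = 1 / 0.97 * 1.03 := by norm_num
  rw [hfactor]
  exact IsMinOn.le_mul_mul_of_le_mul (by norm_num) hf₂_le hf₃_le (isMinOn_iff.2 hπmin) hπS hπ'S

/-- Instance of Lemma 1 for a 3% accepted deviation: the approximation factor
specializes to `(1/0.97) * 1.03 = 103/97`. -/
theorem stmt_3 (n p : ℕ) (hp : 0 < p)
    (κ : Fin p → ℝ) (hκ : ∀ i, 0 < κ i)
    (κm κp : Fin p → ℝ)
    (hκm : ∀ i, κm i = 0.97 * κ i) (hκp : ∀ i, κp i = 1.03 * κ i)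
    (ω : Fin n → ℝ) (hω : ∀ j, 0 ≤ ω j)
    (D : Fin p → Fin n → ℝ) (hD : ∀ i j, 0 ≤ D i j)
    (f₂ f₃ : (Fin n → Fin p) → ℝ)
    (hf₂ : ∀ c, f₂ c =
      ∑ i, (1 / ∑ j ∈ Finset.univ.filter (fun j => c j = i), ω j) *
        ∑ j ∈ Finset.univ.filter (fun j => c j = i), D i j)
    (hf₃ : ∀ c, f₃ c =
      ∑ i, (1 / κ i) * ∑ j ∈ Finset.univ.filter (fun j => c j = i), D i j)
    (S : Set (Fin n → Fin p)) (hS : S.Nonempty)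
    (hfeas : ∀ c ∈ S, ∀ i,
      κm i ≤ ∑ j ∈ Finset.univ.filter (fun j => c j = i), ω j ∧
      ∑ j ∈ Finset.univ.filter (fun j => c j = i), ω j ≤ κp i)
    (π π' : Fin n → Fin p) (hπS : π ∈ S) (hπ'S : π' ∈ S)
    (hπmin : ∀ c ∈ S, f₃ π ≤ f₃ c)
    (hπ'min : ∀ c ∈ S, f₂ π' ≤ f₂ c) :
    f₂ π ≤ (103 / 97) * f₂ π' :=
  stmt_3_general n p κ hκ κm κp hκm hκp ω D hD f₂ f₃ hf₂ hf₃ S hfeas π π' hπS hπ'S hπmin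
end

section
/- Let n, p, m be positive integers, w : Fin m → Fin p → ℤ, t : Fin n → Fin m, and u : Fin n → Fin m → Fin p → ℤ defined by u j i k = 1 if i = t j and u j i k = 0 otherwise. Suppose x : Fin n → Fin m → Fin p → ℤ satisfies 0 ≤ x j i k ≤ u j i k for all j, i, k, and ∑_{i} ∑_{k} x j i k = 1 for every j. Then there exists a unique cluster assignment c : Fin n → Fin p such that x j i k = 1 if i = t j and k = c j, and x j i k = 0 otherwise; moreover, for this c and every k one has ∑_{j} ∑_{i} (w i k) · (x j i k) = ∑_{j : c j = k} w (t j) k. -/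
open Finset

/- An integral 0/1-bounded feasible point of the n-fold system is a disjoint union of unit
vectors: a nonnegative integer vector with coordinate sum 1 is a unit vector, and the upper
bound `u` pins the item's unit vector to the block of its weight type. Reading off which
cluster coordinate carries the 1 gives the assignment, and the `A₁`-rows then just add up
the weights of the items in each cluster. -/

theorem Int.exists_eq_ite_of_nonneg_of_sum_eq_one {ι : Type*} [Fintype ι] [DecidableEq ι]
    (f : ι → ℤ) (hf : ∀ i, 0 ≤ f i) (hsum : ∑ i, f i = 1) :
    ∃ a, ∀ i, f i = if i = a then 1 else 0 := by
  obtain ⟨a, -, ha⟩ : ∃ a ∈ univ, f a ≠ 0 := exists_ne_zero_of_sum_ne_zero (by omega)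
  have hrest_nonneg : 0 ≤ ∑ i ∈ univ.erase a, f i := sum_nonneg fun i _ => hf i
  have hsplit := add_sum_erase univ f (mem_univ a)
  have hfa : f a = 1 := by have := hf a; omega
  have hrest : ∀ i ∈ univ.erase a, f i = 0 :=
    (sum_eq_zero_iff_of_nonneg fun i _ => hf i).mp (by omega)
  refine ⟨a, fun i => ?_⟩
  split_ifs with hi
  · rw [hi, hfa]
  · exact hrest i (mem_erase.mpr ⟨hi, mem_univ i⟩)

theorem exists_eq_ite_of_le_ite_of_sum_eq_one {ι κ : Type*} [Fintype ι] [Fintype κ]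
    [DecidableEq ι] [DecidableEq κ] (y : ι → κ → ℤ) (a : ι)
    (hy : ∀ i k, 0 ≤ y i k ∧ y i k ≤ if i = a then 1 else 0)
    (hsum : ∑ i, ∑ k, y i k = 1) :
    ∃ c, ∀ i k, y i k = if i = a ∧ k = c then 1 else 0 := by
  obtain ⟨⟨a', c⟩, hac⟩ := Int.exists_eq_ite_of_nonneg_of_sum_eq_one (fun q : ι × κ => y q.1 q.2)
    (fun q => (hy q.1 q.2).1) (by rwa [Fintype.sum_prod_type])
  have ha' : a' = a := by
    by_contra hne
    have := (hy a' c).2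
    simp [hac (a', c), hne] at this
  subst ha'
  exact ⟨c, fun i k => by simpa [Prod.ext_iff] using hac (i, k)⟩

theorem sum_mul_ite_eq_sum_filter {n m p : ℕ} (w : Fin m → Fin p → ℤ) (t : Fin n → Fin m)
    (c : Fin n → Fin p) (k : Fin p) :
    ∑ j, ∑ i, w i k * (if i = t j ∧ k = c j then 1 else 0) =
      ∑ j ∈ univ.filter (fun j => c j = k), w (t j) k := by
  simp [mul_ite, ite_and, sum_filter, eq_comm]

theorem stmt_10_general (n p m : ℕ)
    (w : Fin m → Fin p → ℤ) (t : Fin n → Fin m)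
    (u : Fin n → Fin m → Fin p → ℤ)
    (hu : ∀ j i k, u j i k = if i = t j then 1 else 0)
    (x : Fin n → Fin m → Fin p → ℤ)
    (hbnd : ∀ j i k, 0 ≤ x j i k ∧ x j i k ≤ u j i k)
    (hsum : ∀ j, ∑ i, ∑ k, x j i k = 1) :
    (∃! c : Fin n → Fin p,
      ∀ j i k, x j i k = if i = t j ∧ k = c j then 1 else 0) ∧
    (∀ c : Fin n → Fin p,
      (∀ j i k, x j i k = if i = t j ∧ k = c j then 1 else 0) →
      ∀ k, ∑ j, ∑ i, w i k * x j i k =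
        ∑ j ∈ Finset.univ.filter (fun j => c j = k), w (t j) k) := by
  have hbnd' : ∀ j i k, 0 ≤ x j i k ∧ x j i k ≤ if i = t j then 1 else 0 := fun j i k =>
    hu j i k ▸ hbnd j i k
  choose c hc using fun j => exists_eq_ite_of_le_ite_of_sum_eq_one (x j) (t j) (hbnd' j) (hsum j)
  refine ⟨⟨c, hc, fun c' hc' => funext fun j => ?_⟩, fun c' hc' k => ?_⟩
  · have := (hc' j (t j) (c j)).symm.trans (hc j (t j) (c j))
    simpa [eq_comm] using this
  · simp_rw [hc']
    exact sum_mul_ite_eq_sum_filter w t c' k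

/-- Converse direction of the reduction in the proof of Theorem 1: every
integral vector feasible for the constructed `n`-fold system decodes to a
unique cluster assignment, and the `A₁`-block equations compute the cluster
weights. -/
theorem stmt_10 (n p m : ℕ) (hn : 0 < n) (hp : 0 < p) (hm : 0 < m)
    (w : Fin m → Fin p → ℤ) (t : Fin n → Fin m)
    (u : Fin n → Fin m → Fin p → ℤ)
    (hu : ∀ j i k, u j i k = if i = t j then 1 else 0)
    (x : Fin n → Fin m → Fin p → ℤ)
    (hbnd : ∀ j i k, 0 ≤ x j i k ∧ x j i k ≤ u j i k)
    (hsum : ∀ j, ∑ i, ∑ k, x j i k = 1) :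
    (∃! c : Fin n → Fin p,
      ∀ j i k, x j i k = if i = t j ∧ k = c j then 1 else 0) ∧
    (∀ c : Fin n → Fin p,
      (∀ j i k, x j i k = if i = t j ∧ k = c j then 1 else 0) →
      ∀ k, ∑ j, ∑ i, w i k * x j i k =
        ∑ j ∈ Finset.univ.filter (fun j => c j = k), w (t j) k) :=
  stmt_10_general n p m w t u hu x hbnd hsum
end
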